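/- For all integers i ≥ 0 and n > i + g, the polynomial s_{i,n}(x) ∈ Λ[x] has degree exactly 2gn + i in x, and its leading coefficient is the rational number 2^{n−1} · C_{2g+2i+1,n} / n! (which is therefore a nonzero integer). -/

import Mathlib

open Polynomial

noncomputable section

/-- The index set for the 3g+2 variables pᵢ (i ≤ 2g) and qᵢ (i ≤ g). -/
abbrev HypVars (g : ℕ) := Fin (2*g+1) ⊕ Fin (g+1)

/-- Λ = ℤ[p₀,…,p_{2g},q₀,…,q_g]. -/
abbrev Lam (g : ℕ) := MvPolynomial (HypVars g) ℤ

/-- 𝗉(x) = x^{2g+1} + p_{2g}x^{2g} + ⋯ + p₀ ∈ Λ[x]. -/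
def pUniv (g : ℕ) : Polynomial (Lam g) :=
  X ^ (2*g+1) + ∑ i : Fin (2*g+1), C (MvPolynomial.X (Sum.inl i)) * X ^ (i : ℕ)

/-- 𝗊(x) = q_gx^g + ⋯ + q₀ ∈ Λ[x]. -/
def qUniv (g : ℕ) : Polynomial (Lam g) :=
  ∑ i : Fin (g+1), C (MvPolynomial.X (Sum.inr i)) * X ^ (i : ℕ)

/-- F(x) = 𝗊(x)² + 4𝗉(x). -/
def FUniv (g : ℕ) : Polynomial (Lam g) := qUniv g ^ 2 + 4 * pUniv g

/-- μ = ⌊(N−2g−1)/2⌋. -/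
def muN (g N : ℕ) : ℕ := (N - (2*g+1)) / 2

/-- ν = ⌊N/2⌋ + 1. -/
def nuN (N : ℕ) : ℕ := N / 2 + 1

/-- C_{m,n} = ∏_{r=0}^{n−1} (m − 2r). -/
def Cc (m : ℤ) (n : ℕ) : ℤ := ∏ r ∈ Finset.range n, (m - 2*(r : ℤ))

/-- `IsUnivST g s t` says that `s i n`, `t i n` (for `n ≥ 1`) are the unique polynomials
`s_{i,n}(x), t_{i,n}(x) ∈ Λ[x]` with
`(2y + 𝗊(x))^{2n−1} · D₁ⁿ(xⁱy) = n!(s_{i,n}(x) + t_{i,n}(x)y)` in the fraction field `L` of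
`Λ[x][y]/(y² + 𝗊(x)y − 𝗉(x))`, where `D₁` is the derivation with `D₁x = 1` vanishing on `Λ`.
This is phrased by quantifying over every realization of that fraction field together with
its canonical derivation. -/
def IsUnivST (g : ℕ) (s t : ℕ → ℕ → Polynomial (Lam g)) : Prop :=
  ∀ (L : Type) [Field L], ∀ (φ : Polynomial (Lam g) →+* L) (y : L) (D : L → L),
    Function.Injective φ →
    y ^ 2 + φ (qUniv g) * y = φ (pUniv g) →
    (∀ u v : Polynomial (Lam g), φ v * y = φ u → v = 0) →
    (∀ a b : L, D (a + b) = D a + D b) →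
    (∀ a b : L, D (a * b) = a * D b + D a * b) →
    D (φ X) = 1 →
    (∀ c : Lam g, D (φ (C c)) = 0) →
    ∀ i n : ℕ, 1 ≤ n →
      (2 * y + φ (qUniv g)) ^ (2 * n - 1) * D^[n] (φ X ^ i * y)
        = (n.factorial : L) * (φ (s i n) + φ (t i n) * y)

/-- σ : Λ[x] → k[x], sending pᵢ, qᵢ to the corresponding coefficients of P, Q. -/
def sigmaPQ (g : ℕ) {k : Type} [CommRing k] (P Q : Polynomial k) :
    Polynomial (Lam g) →+* Polynomial k :=
  Polynomial.mapRingHom (MvPolynomial.eval₂Hom (Int.castRingHom k)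
    (Sum.elim (fun i : Fin (2*g+1) => P.coeff i) (fun i : Fin (g+1) => Q.coeff i)))

/-- `(x₀,y₀)` is an N-division point of `(P,Q)`: there are Φ, Ψ ∈ k[x], Ψ ≠ 0,
deg Ψ ≤ μ, deg Φ ≤ ν−1, and a branch η of the curve at x₀ with constant term y₀, such that
Φ(x₀+T) + Ψ(x₀+T)η ≡ 0 mod T^N. -/
def IsDivisionPoint (g : ℕ) {k : Type} [Field k] (P Q : Polynomial k) (N : ℕ)
    (x₀ y₀ : k) : Prop :=
  ∃ (Φ Ψ : Polynomial k) (η : PowerSeries k),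
    Ψ ≠ 0 ∧ Ψ.natDegree ≤ muN g N ∧ Φ.degree ≤ ((nuN N - 1 : ℕ) : WithBot ℕ) ∧
    PowerSeries.constantCoeff η = y₀ ∧
    η ^ 2 + ((Q.comp (C x₀ + X) : Polynomial k) : PowerSeries k) * η
      = ((P.comp (C x₀ + X) : Polynomial k) : PowerSeries k) ∧
    (PowerSeries.X : PowerSeries k) ^ N ∣
      (((Φ.comp (C x₀ + X) : Polynomial k) : PowerSeries k)
        + ((Ψ.comp (C x₀ + X) : Polynomial k) : PowerSeries k) * η)


/-!
Realise `L` as `K(√F)` with `K = Frac Λ[x]`: the quotient rule extends `d/dx` to `K`, and a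
derivation of a field of characteristic `0` extends to any finite extension. There
`2y + 𝗊 = √F`, so `xⁱy = (xⁱ√F − xⁱ𝗊)/2`, and `D₁ⁿ` kills `xⁱ𝗊` because its degree `i + g` is
less than `n`. Differentiating `P√F` gives `D₁ⁿ(P√F)·(2F)ⁿ = Rₙ·√F` with `R₀ = P` and
`Rₙ₊₁ = 2F·Rₙ' − (2n−1)·F'·Rₙ`; as `√F^{2n} = Fⁿ`, this turns the defining identity of
`s_{i,n}` into `Rₙ = 2ⁿ⁺¹·n!·s_{i,n}` for `P = xⁱ`. Since `F` has degree `2g+1` and leading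
coefficient `4`, each step of the recursion raises the degree by `2g` and multiplies the top
coefficient by `4(2g + 2i + 1 − 2n)`.
-/

open scoped Differential

theorem Cc_succ (m : ℤ) (n : ℕ) : Cc m (n + 1) = Cc m n * (m - 2 * n) :=
  Finset.prod_range_succ _ n

theorem Cc_two_mul_add_one_ne_zero (k : ℤ) (n : ℕ) : Cc (2 * k + 1) n ≠ 0 :=
  Finset.prod_ne_zero_iff.2 fun r _ => by omega

theorem MvPolynomial.exists_eq_C_of_C_mul_eq_C {σ R : Type*} [CommRing R] [IsDomain R]
    {a b : R} {z : MvPolynomial σ R} (ha : a ≠ 0) (h : C a * z = C b) :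
    ∃ c, z = C c ∧ a * c = b := by
  classical
  have hz : z = C (z.coeff 0) := by
    ext m
    have hm := congrArg (coeff m) h
    rw [coeff_C_mul, coeff_C] at hm
    rw [coeff_C]
    split_ifs at hm ⊢ with h0
    · rw [h0]
    · exact (mul_eq_zero.1 hm).resolve_left ha
  refine ⟨z.coeff 0, hz, C_injective σ R ?_⟩
  rw [map_mul, ← hz, h]

namespace Polynomial

variable {A : Type*} [CommRing A]

/-- `Dⁿ(P√F) · (2F)ⁿ = sqrtDerivNum F P n · √F` for every derivation `D` extending `d/dx`. -/
def sqrtDerivNum (F P : A[X]) : ℕ → A[X]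
  | 0 => P
  | n + 1 => 2 * F * derivative (sqrtDerivNum F P n)
      - C (2 * (n : A) - 1) * derivative F * sqrtDerivNum F P n

theorem natDegree_le_and_coeff_sqrtDerivNum_step {F R : A[X]} {d e : ℕ} (k : A)
    (hF : F.natDegree ≤ e + 1) (hR : R.natDegree ≤ d) :
    (2 * F * derivative R - C k * derivative F * R).natDegree ≤ d + e ∧
      (2 * F * derivative R - C k * derivative F * R).coeff (d + e) =
        (2 * d - k * (e + 1)) * F.coeff (e + 1) * R.coeff d := by
  have hF' : (derivative F).natDegree ≤ e := (natDegree_derivative_le F).trans (by omega)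
  have hF'R : (C k * derivative F * R).natDegree ≤ d + e := by
    rw [add_comm d]
    exact natDegree_mul_le_of_le ((natDegree_C_mul_le _ _).trans hF') hR
  have hF'R_coeff :
      (C k * derivative F * R).coeff (d + e) = k * (e + 1) * F.coeff (e + 1) * R.coeff d := by
    rw [mul_assoc, coeff_C_mul, add_comm d, coeff_mul_add_eq_of_natDegree_le hF' hR,
      coeff_derivative]
    ring
  obtain _ | d := d
  · rw [eq_C_of_natDegree_le_zero hR] at hF'R hF'R_coeff ⊢
    simp only [derivative_C, mul_zero, zero_sub, natDegree_neg, coeff_neg, hF'R, hF'R_coeff,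
      true_and]
    simp
  · have hR' : (derivative R).natDegree ≤ d := (natDegree_derivative_le R).trans (by omega)
    have hd : d + 1 + e = e + 1 + d := by omega
    have hFR' : (F * derivative R).natDegree ≤ d + 1 + e := hd ▸ natDegree_mul_le_of_le hF hR'
    have hFR'_coeff :
        (F * derivative R).coeff (d + 1 + e) = (d + 1) * F.coeff (e + 1) * R.coeff (d + 1) := by
      rw [hd, coeff_mul_add_eq_of_natDegree_le hF hR', coeff_derivative]
      ring
    rw [mul_assoc 2, ← C_ofNat]
    refine ⟨(natDegree_sub_le_of_le ((natDegree_C_mul_le 2 _).trans hFR') hF'R).trans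
      (max_self _).le, ?_⟩
    rw [coeff_sub, hF'R_coeff, coeff_C_mul, hFR'_coeff]
    push_cast
    ring

theorem natDegree_le_and_coeff_sqrtDerivNum {F P : A[X]} {d e : ℕ}
    (hF : F.natDegree ≤ e + 1) (hP : P.natDegree ≤ d) (n : ℕ) :
    (sqrtDerivNum F P n).natDegree ≤ d + e * n ∧
      (sqrtDerivNum F P n).coeff (d + e * n) =
        F.coeff (e + 1) ^ n * Cc (2 * d + e + 1) n * P.coeff d := by
  induction n with
  | zero => simpa [sqrtDerivNum, Cc] using hP
  | succ n ih =>
    obtain ⟨hdeg, hcoeff⟩ := natDegree_le_and_coeff_sqrtDerivNum_step (2 * (n : A) - 1) hF ih.1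
    rw [show d + e * (n + 1) = d + e * n + e by ring]
    refine ⟨hdeg, ?_⟩
    rw [sqrtDerivNum, hcoeff, ih.2, Cc_succ]
    push_cast
    ring

end Polynomial

namespace Derivation

section Localization

variable {R S : Type*} [CommRing R] [CommRing S] [Algebra R S] (M : Submonoid R)
  [IsLocalization M S] (d : Derivation ℤ R R)

def toDualNumber : R →+* TrivSqZeroExt S S where
  toFun r := .inl (algebraMap R S r) + .inr (algebraMap R S (d r))
  map_one' := by ext <;> simp
  map_mul' a b := by ext <;> simp [-DualNumber.inr_eq_smul_eps, mul_comm]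
  map_zero' := by ext <;> simp
  map_add' a b := by ext <;> simp [-DualNumber.inr_eq_smul_eps]

theorem fst_toDualNumber (r : R) : (d.toDualNumber (S := S) r).fst = algebraMap R S r := by
  simp [toDualNumber]

theorem snd_toDualNumber (r : R) : (d.toDualNumber (S := S) r).snd = algebraMap R S (d r) := by
  simp [toDualNumber, -DualNumber.inr_eq_smul_eps]

def liftDualNumber : S →+* TrivSqZeroExt S S :=
  IsLocalization.lift (M := M) (g := d.toDualNumber) fun m =>
    TrivSqZeroExt.isUnit_iff_isUnit_fst.2 <| by
      simpa [fst_toDualNumber] using IsLocalization.map_units S m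

theorem fst_liftDualNumber (z : S) : (d.liftDualNumber M z).fst = z := by
  have : (TrivSqZeroExt.fstHom ℤ S S).toRingHom.comp (d.liftDualNumber M) = RingHom.id S :=
    IsLocalization.ringHom_ext M <| RingHom.ext fun r => by
      simp [liftDualNumber, IsLocalization.lift_eq, fst_toDualNumber]
  exact congrArg (· z) this

/-- The quotient-rule extension of `d`: the `ε`-part of the extension of the ring map
`r ↦ r + d(r)ε` to the localization. -/
def extendLocalization : Derivation ℤ S S :=
  Derivation.mk'
    { toFun := fun z => (d.liftDualNumber M z).snd
      map_add' := fun a b => by simp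
      map_smul' := fun k a => by simp }
    fun a b => by simp [fst_liftDualNumber, mul_comm]

theorem extendLocalization_algebraMap (r : R) :
    d.extendLocalization M (algebraMap R S r) = algebraMap R S (d r) := by
  simp [extendLocalization, liftDualNumber, IsLocalization.lift_eq, snd_toDualNumber]

end Localization

variable {R A L : Type*} [CommRing R] [CommRing A] [CommRing L] [Algebra R L]
  (D : Derivation R L L) {φ : A[X] →+* L}

theorem iterate_apply_map_eq (hD : ∀ h, D (φ h) = φ (derivative h)) (n : ℕ) (h : A[X]) :
    D^[n] (φ h) = φ (derivative^[n] h) := by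
  induction n generalizing h with
  | zero => rfl
  | succ n ih => rw [Function.iterate_succ_apply, hD, ih, Function.iterate_succ_apply]

theorem mul_leibniz_pow (x : L) (n : ℕ) : x * D (x ^ n) = n * x ^ n * D x := by
  cases n with
  | zero => simp
  | succ n =>
    rw [leibniz_pow, Nat.add_sub_cancel, nsmul_eq_mul, smul_eq_mul]
    push_cast
    ring

theorem iterate_apply_map_mul_sqrt (hD : ∀ h, D (φ h) = φ (derivative h)) {F : A[X]} {w : L}
    (hw : w ^ 2 = φ F) (P : A[X]) (n : ℕ) :
    D^[n] (φ P * w) * (2 * φ F) ^ n = φ (sqrtDerivNum F P n) * w := by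
  have hDw : 2 * φ F * D w = φ (derivative F) * w := by
    have h := congrArg D hw
    rw [leibniz_pow, hD, Nat.add_one_sub_one, pow_one, nsmul_eq_mul, smul_eq_mul] at h
    rw [← hw]
    linear_combination w * h
  have hD2F : D (2 * φ F) = 2 * φ (derivative F) := by
    rw [← map_ofNat φ 2, ← map_mul, hD, derivative_mul]
    simp
  induction n with
  | zero => simp [sqrtDerivNum]
  | succ n ih =>
    set u := D^[n] (φ P * w)
    have h := congrArg D ih
    simp only [leibniz, hD, smul_eq_mul] at h
    have hpow := D.mul_leibniz_pow (2 * φ F) n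
    rw [Function.iterate_succ_apply', sqrtDerivNum, pow_succ]
    simp only [map_sub, map_mul, map_ofNat, _root_.map_natCast, map_one, hD2F] at hpow ⊢
    linear_combination (2 * φ F) * h - u * hpow + φ (sqrtDerivNum F P n) * hDw
      - 2 * n * φ (derivative F) * ih

end Derivation

instance {A : Type*} [CommRing A] : Differential (FractionRing A[X]) :=
  ⟨(derivative' (R := A)).restrictScalars ℤ |>.extendLocalization (nonZeroDivisors A[X])⟩

theorem FractionRing.deriv_algebraMap {A : Type*} [CommRing A] (h : A[X]) :
    (algebraMap A[X] (FractionRing A[X]) h)′ =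
      algebraMap A[X] (FractionRing A[X]) (derivative h) :=
  Derivation.extendLocalization_algebraMap _ _ h

namespace UnivHyperelliptic

variable (g : ℕ)

theorem natDegree_qUniv_le : (qUniv g).natDegree ≤ g :=
  natDegree_le_iff_degree_le.2 (Order.le_of_lt_succ (degree_sum_fin_lt _))

theorem natDegree_pUniv_le : (pUniv g).natDegree ≤ 2 * g + 1 :=
  natDegree_add_le_of_degree_le (natDegree_X_pow_le _)
    (natDegree_le_iff_degree_le.2 (degree_sum_fin_lt _).le)

theorem coeff_pUniv : (pUniv g).coeff (2 * g + 1) = 1 := by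
  rw [pUniv, coeff_add, coeff_X_pow_self, coeff_eq_zero_of_degree_lt (degree_sum_fin_lt _),
    add_zero]

theorem natDegree_qUniv_sq_le : (qUniv g ^ 2).natDegree ≤ 2 * g :=
  natDegree_pow_le_of_le 2 (natDegree_qUniv_le g)

theorem natDegree_FUniv_le : (FUniv g).natDegree ≤ 2 * g + 1 :=
  natDegree_add_le_of_degree_le ((natDegree_qUniv_sq_le g).trans (by omega))
    ((natDegree_C_mul_le 4 _).trans (natDegree_pUniv_le g))

theorem coeff_FUniv : (FUniv g).coeff (2 * g + 1) = 4 := by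
  rw [FUniv, coeff_add,
    coeff_eq_zero_of_natDegree_lt ((natDegree_qUniv_sq_le g).trans_lt (by omega)),
    coeff_ofNat_mul, coeff_pUniv, zero_add, mul_one]

theorem natDegree_FUniv : (FUniv g).natDegree = 2 * g + 1 :=
  natDegree_eq_of_le_of_coeff_ne_zero (natDegree_FUniv_le g) (by rw [coeff_FUniv]; norm_num)

theorem FUniv_ne_zero : FUniv g ≠ 0 :=
  ne_zero_of_natDegree_gt (n := 0) (by rw [natDegree_FUniv]; omega)

abbrev FracField := FractionRing (Lam g)[X]

theorem not_sq_FUniv (b : FracField g) : b ^ 2 ≠ algebraMap _ _ (FUniv g) := by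
  intro hb
  have hint : IsIntegral (Lam g)[X] b :=
    ⟨X ^ 2 - C (FUniv g), monic_X_pow_sub_C _ two_ne_zero, by simp [hb]⟩
  obtain ⟨r, rfl⟩ := IsIntegrallyClosed.isIntegral_iff.mp hint
  rw [← map_pow] at hb
  have := congrArg natDegree (IsFractionRing.injective _ (FracField g) hb)
  rw [natDegree_pow, natDegree_FUniv] at this
  omega

def curvePoly : (FracField g)[X] := X ^ 2 - C (algebraMap _ _ (FUniv g))

instance : Fact (Irreducible (curvePoly g)) :=
  ⟨X_pow_sub_C_irreducible_of_prime Nat.prime_two (not_sq_FUniv g)⟩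

instance : Fact (curvePoly g).Monic := ⟨monic_X_pow_sub_C _ two_ne_zero⟩

/-- Not an `abbrev`: `AdjoinRoot` carries its own `ℤ`-algebra structure, which is not
reducibly equal to the one in the type of `Differential.deriv`. -/
def CurveField : Type := AdjoinRoot (curvePoly g)

instance : Field (CurveField g) := inferInstanceAs (Field (AdjoinRoot _))

instance : Algebra (FracField g) (CurveField g) := inferInstanceAs (Algebra _ (AdjoinRoot _))

instance : Differential (CurveField g) := inferInstanceAs (Differential (AdjoinRoot _))

instance : DifferentialAlgebra (FracField g) (CurveField g) :=
  inferInstanceAs (DifferentialAlgebra _ (AdjoinRoot _))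

instance : CharZero (CurveField g) :=
  charZero_of_injective_algebraMap (algebraMap (FracField g) (CurveField g)).injective

def sqrtF : CurveField g := AdjoinRoot.root (curvePoly g)

def toCurveField : (Lam g)[X] →+* CurveField g :=
  (algebraMap (FracField g) (CurveField g)).comp (algebraMap _ _)

def curveY : CurveField g := (sqrtF g - toCurveField g (qUniv g)) / 2

theorem toCurveField_injective : Function.Injective (toCurveField g) :=
  (algebraMap (FracField g) (CurveField g)).injective.comp (IsFractionRing.injective _ _)

theorem sqrtF_sq : sqrtF g ^ 2 = toCurveField g (FUniv g) := by
  have h := AdjoinRoot.eval₂_root (curvePoly g)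
  rwa [curvePoly, eval₂_sub, eval₂_X_pow, eval₂_C, sub_eq_zero, ← AdjoinRoot.algebraMap_eq]
    at h

theorem algebraMap_ne_sqrtF (c : FracField g) :
    algebraMap (FracField g) (CurveField g) c ≠ sqrtF g := by
  intro hc
  have h := sqrtF_sq g
  rw [← hc, ← map_pow, toCurveField, RingHom.comp_apply] at h
  exact not_sq_FUniv g c ((algebraMap (FracField g) (CurveField g)).injective h)

theorem deriv_toCurveField (h : (Lam g)[X]) :
    (toCurveField g h)′ = toCurveField g (derivative h) := by
  rw [toCurveField, RingHom.comp_apply, deriv_algebraMap, FractionRing.deriv_algebraMap]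
  rfl

theorem two_mul_curveY_add : 2 * curveY g + toCurveField g (qUniv g) = sqrtF g := by
  rw [curveY, mul_div_cancel₀ _ two_ne_zero, sub_add_cancel]

theorem curveY_sq_add :
    curveY g ^ 2 + toCurveField g (qUniv g) * curveY g = toCurveField g (pUniv g) := by
  have h := sqrtF_sq g
  rw [← two_mul_curveY_add, FUniv, map_add, map_pow, map_mul, map_ofNat] at h
  refine mul_left_cancel₀ (by norm_num : (4 : CurveField g) ≠ 0) ?_
  linear_combination h

theorem eq_zero_of_map_mul_curveY_eq {u v : (Lam g)[X]}
    (h : toCurveField g v * curveY g = toCurveField g u) : v = 0 := by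
  by_contra hv
  have hv' : toCurveField g v ≠ 0 := (map_ne_zero_iff _ (toCurveField_injective g)).2 hv
  apply algebraMap_ne_sqrtF g (algebraMap _ _ (2 * u + v * qUniv g) / algebraMap _ _ v)
  rw [map_div₀]
  change toCurveField g (2 * u + v * qUniv g) / toCurveField g v = _
  rw [div_eq_iff hv', ← two_mul_curveY_add, map_add, map_mul, map_mul, map_ofNat, ← h]
  ring

theorem two_nsmul_iterate_deriv_X_pow_mul_curveY {i n : ℕ} (hn : i + g < n) :
    2 • (Differential.deriv (R := CurveField g))^[n] (toCurveField g X ^ i * curveY g) =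
      (Differential.deriv (R := CurveField g))^[n] (toCurveField g (X ^ i) * sqrtF g) := by
  set D := Differential.deriv (R := CurveField g)
  have hqi : D^[n] (toCurveField g (X ^ i * qUniv g)) = 0 := by
    rw [D.iterate_apply_map_eq (deriv_toCurveField g), iterate_derivative_eq_zero, map_zero]
    exact (natDegree_mul_le_of_le (natDegree_X_pow_le i) (natDegree_qUniv_le g)).trans_lt hn
  have h2y : 2 • (toCurveField g X ^ i * curveY g) =
      toCurveField g (X ^ i) * sqrtF g - toCurveField g (X ^ i * qUniv g) := by
    rw [← two_mul_curveY_add, map_mul, map_pow, nsmul_eq_mul]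
    ring
  rw [← iterate_map_nsmul, h2y, iterate_map_sub, hqi, sub_zero]

theorem toCurveField_sqrtDerivNum_eq_of_isUnivST {s t : ℕ → ℕ → (Lam g)[X]}
    (hst : IsUnivST g s t) {i n : ℕ} (hn : i + g < n) :
    toCurveField g (sqrtDerivNum (FUniv g) (X ^ i) n) =
      2 ^ (n + 1) * n.factorial * (toCurveField g (s i n) + toCurveField g (t i n) * curveY g) := by
  set D := Differential.deriv (R := CurveField g)
  set φ := toCurveField g
  have hD : ∀ h, D (φ h) = φ (derivative h) := deriv_toCurveField g
  have hs := hst (CurveField g) φ (curveY g) D (toCurveField_injective g) (curveY_sq_add g)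
    (fun _ _ => eq_zero_of_map_mul_curveY_eq g) (map_add D)
    (fun a b => by rw [D.leibniz, smul_eq_mul, smul_eq_mul, mul_comm b])
    (by rw [hD, derivative_X, map_one]) (fun c => by rw [hD, derivative_C, map_zero]) i n (by omega)
  rw [two_mul_curveY_add] at hs
  have hR := D.iterate_apply_map_mul_sqrt hD (sqrtF_sq g) (X ^ i) n
  refine mul_left_cancel₀ (pow_ne_zero n ((map_ne_zero_iff _ (toCurveField_injective g)).2
    (FUniv_ne_zero g))) ?_
  calc φ (FUniv g) ^ n * φ (sqrtDerivNum (FUniv g) (X ^ i) n)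
      = sqrtF g ^ (2 * n - 1) * (φ (sqrtDerivNum (FUniv g) (X ^ i) n) * sqrtF g) := by
        rw [← sqrtF_sq, ← pow_mul, mul_comm _ (sqrtF g), ← mul_assoc, ← pow_succ,
          Nat.sub_add_cancel (by omega)]
    _ = 2 * 2 ^ n * φ (FUniv g) ^ n * (sqrtF g ^ (2 * n - 1) * D^[n] (φ X ^ i * curveY g)) := by
        rw [← hR, ← two_nsmul_iterate_deriv_X_pow_mul_curveY g hn, nsmul_eq_mul, mul_pow]
        ring
    _ = _ := by
        rw [hs]
        ring

theorem sqrtDerivNum_eq_of_isUnivST {s t : ℕ → ℕ → (Lam g)[X]} (hst : IsUnivST g s t)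
    {i n : ℕ} (hn : i + g < n) :
    sqrtDerivNum (FUniv g) (X ^ i) n = (2 ^ (n + 1) * n.factorial : (Lam g)[X]) * s i n := by
  have hR := toCurveField_sqrtDerivNum_eq_of_isUnivST g hst hn
  have ht : (2 ^ (n + 1) * n.factorial : (Lam g)[X]) * t i n = 0 := by
    refine eq_zero_of_map_mul_curveY_eq g (u := sqrtDerivNum (FUniv g) (X ^ i) n -
      (2 ^ (n + 1) * n.factorial : (Lam g)[X]) * s i n) ?_
    rw [map_sub, hR]
    simp only [map_mul, map_pow, map_ofNat, map_natCast]
    ring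
  apply toCurveField_injective g
  have ht' := congrArg (toCurveField g) ht
  rw [hR]
  simp only [map_mul, map_pow, map_ofNat, map_natCast, map_zero] at ht' ⊢
  linear_combination curveY g * ht'

theorem natDegree_le_and_coeff_of_isUnivST {s t : ℕ → ℕ → (Lam g)[X]} (hst : IsUnivST g s t)
    {i n : ℕ} (hn : i + g < n) :
    (s i n).natDegree ≤ 2 * g * n + i ∧
      MvPolynomial.C (2 ^ (n + 1) * n.factorial : ℤ) * (s i n).coeff (2 * g * n + i) =
        MvPolynomial.C (4 ^ n * Cc (2 * g + 2 * i + 1) n) := by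
  obtain ⟨hdeg, hcoeff⟩ :=
    natDegree_le_and_coeff_sqrtDerivNum (natDegree_FUniv_le g) (natDegree_X_pow_le i) n
  have hN : (2 ^ (n + 1) * n.factorial : (Lam g)[X]) =
      C (MvPolynomial.C (2 ^ (n + 1) * n.factorial : ℤ)) := by
    simp only [map_mul, map_pow, map_ofNat, map_natCast]
  rw [sqrtDerivNum_eq_of_isUnivST g hst hn, hN, show i + 2 * g * n = 2 * g * n + i by ring]
    at hdeg hcoeff
  rw [natDegree_C_mul (by simp [Nat.factorial_ne_zero])] at hdeg
  rw [coeff_C_mul] at hcoeff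
  refine ⟨hdeg, ?_⟩
  rw [hcoeff, coeff_FUniv, coeff_X_pow_self, mul_one,
    show 2 * (i : ℤ) + ((2 * g : ℕ) : ℤ) + 1 = 2 * g + 2 * i + 1 by push_cast; ring,
    map_mul, map_pow, map_ofNat, eq_intCast]

end UnivHyperelliptic

theorem stmt12_general (g : ℕ) (s t : ℕ → ℕ → Polynomial (Lam g))
    (hst : IsUnivST g s t) (i n : ℕ) (hn : i + g < n) :
    (s i n).degree = ((2*g*n + i : ℕ) : WithBot ℕ) ∧
    ∃ c : ℤ, c ≠ 0 ∧ (s i n).leadingCoeff = (c : Lam g) ∧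
      (n.factorial : ℤ) * c = 2^(n-1) * Cc (2*(g:ℤ)+2*(i:ℤ)+1) n := by
  obtain ⟨hdeg, hcoeff⟩ := UnivHyperelliptic.natDegree_le_and_coeff_of_isUnivST g hst hn
  obtain ⟨c, hc, hNc⟩ := MvPolynomial.exists_eq_C_of_C_mul_eq_C
    (by positivity : (2 ^ (n + 1) * n.factorial : ℤ) ≠ 0) hcoeff
  have hCc : Cc (2 * g + 2 * i + 1) n ≠ 0 := by
    simpa [mul_add, add_assoc] using Cc_two_mul_add_one_ne_zero (g + i) n
  have hc0 : c ≠ 0 := by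
    rintro rfl
    exact mul_ne_zero (pow_ne_zero n four_ne_zero) hCc (by simpa using hNc.symm)
  have hlc : (s i n).coeff (2 * g * n + i) ≠ 0 := by simpa [hc] using hc0
  have hnat : (s i n).natDegree = 2 * g * n + i := natDegree_eq_of_le_of_coeff_ne_zero hdeg hlc
  refine ⟨(degree_eq_iff_natDegree_eq fun h => hlc (by rw [h, coeff_zero])).2 hnat,
    c, hc0, by rw [leadingCoeff, hnat, hc, eq_intCast], ?_⟩
  have h4 : (4 : ℤ) ^ n = 2 ^ (n + 1) * 2 ^ (n - 1) := by
    rw [← pow_add, show n + 1 + (n - 1) = 2 * n by omega, pow_mul]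
    norm_num
  apply mul_left_cancel₀ (pow_ne_zero (n + 1) (two_ne_zero : (2 : ℤ) ≠ 0))
  linear_combination hNc + Cc (2 * g + 2 * i + 1) n * h4

/-- for n > i+g, s_{i,n}(x) has degree exactly 2gn+i in x, and its leading
coefficient is the nonzero integer 2^{n−1}·C_{2g+2i+1,n}/n!. -/
theorem stmt12 (g : ℕ) (hg : 1 ≤ g) (s t : ℕ → ℕ → Polynomial (Lam g))
    (hst : IsUnivST g s t) (i n : ℕ) (hn : i + g < n) :
    (s i n).degree = ((2*g*n + i : ℕ) : WithBot ℕ) ∧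
    ∃ c : ℤ, c ≠ 0 ∧ (s i n).leadingCoeff = (c : Lam g) ∧
      (n.factorial : ℤ) * c = 2^(n-1) * Cc (2*(g:ℤ)+2*(i:ℤ)+1) n :=
  stmt12_general g s t hst i n hn
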